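/- If x̄ : ℝ → ℝ^m is differentiable with all coordinates strictly positive, satisfies dx̄_{ij}/dt = γ(S̄_{ij}(t) − x̄_{ij}(t)) with γ > 0, and at every time t the inequality ∑_{ij} S̄_{ij}(t)/x̄_{ij}(t) ≥ ∑_{ij} x*_{ij}/x̄_{ij}(t) holds for a fixed vector x* with strictly positive coordinates, then d/dt ∑_{ij} log x̄_{ij}(t) ≥ γ(∑_{ij} log x*_{ij} − ∑_{ij} log x̄_{ij}(t)). -/

import Mathlib

open Finset

/-- Key differential inequality in the convergence proof of PF-PS. -/
theorem stmt_8 (m : ℕ) (hm : 1 ≤ m) (γ : ℝ) (hγ : 0 < γ)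
    (xs : Fin m → ℝ) (hxs : ∀ i, 0 < xs i)
    (xbar Sbar : Fin m → ℝ → ℝ)
    (hpos : ∀ i t, 0 < xbar i t)
    (hderiv : ∀ i t, HasDerivAt (xbar i) (γ * (Sbar i t - xbar i t)) t)
    (hineq : ∀ t, ∑ i, xs i / xbar i t ≤ ∑ i, Sbar i t / xbar i t) :
    ∀ t, γ * (∑ i, Real.log (xs i) - ∑ i, Real.log (xbar i t)) ≤
      deriv (fun s => ∑ i, Real.log (xbar i s)) t := by
  intro t
  have hd : HasDerivAt (fun s => ∑ i, Real.log (xbar i s))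
      (∑ i, γ * (Sbar i t - xbar i t) / xbar i t) t :=
    HasDerivAt.fun_sum fun i _ => (hderiv i t).log (hpos i t).ne'
  rw [hd.deriv]
  have hlog : ∀ i : Fin m, Real.log (xs i) - Real.log (xbar i t)
      ≤ xs i / xbar i t - 1 := by
    intro i
    have h := Real.log_le_sub_one_of_pos (div_pos (hxs i) (hpos i t))
    rwa [Real.log_div (hxs i).ne' (hpos i t).ne'] at h
  calc γ * (∑ i, Real.log (xs i) - ∑ i, Real.log (xbar i t))
      ≤ γ * (∑ i, (xs i / xbar i t - 1)) := by
        apply mul_le_mul_of_nonneg_left _ hγ.le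
        rw [← Finset.sum_sub_distrib]
        exact Finset.sum_le_sum fun i _ => hlog i
    _ ≤ γ * (∑ i, (Sbar i t / xbar i t - 1)) := by
        apply mul_le_mul_of_nonneg_left _ hγ.le
        simp only [Finset.sum_sub_distrib]
        have := hineq t
        linarith
    _ = ∑ i, γ * (Sbar i t - xbar i t) / xbar i t := by
        rw [Finset.mul_sum]
        congr 1; ext i
        rw [mul_div_assoc, sub_div, div_self (hpos i t).ne']
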